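/- arXiv:math/9901057 — 2 statements merged into one kernel-verified Lean document; each statement's English description precedes it below -/
import Mathlib

section
/- For any nonnegative integer vector s and any q ∈ {1,…,d}, the polynomials P_s satisfy Δ_q P_s(t) = -P_{s+e_q}(t - e_q), i.e., P_s(t) - P_s(t - e_q) = -P_{s+e_q}(t - e_q). -/
/-- The binomial coefficient `C(t, k)` for integer arguments, with the
convention `C(t, k) = 0` for `k < 0`. -/
noncomputable def intChoose (t k : ℤ) : ℚ :=
  if 0 ≤ k then (∏ m ∈ Finset.range k.toNat, ((t : ℚ) - m)) / (Nat.factorial k.toNat) else 0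

lemma intChoose_pascal (t k : ℤ) :
    intChoose t k = intChoose (t - 1) k + intChoose (t - 1) (k - 1) := by
  unfold intChoose
  rcases lt_trichotomy k 0 with hk | hk | hk
  · rw [if_neg (not_le.mpr hk), if_neg (not_le.mpr hk),
      if_neg (not_le.mpr (by omega : k - 1 < 0))]
    ring
  · subst hk; norm_num
  · obtain ⟨n, rfl⟩ : ∃ n : ℕ, k = (n : ℤ) + 1 := ⟨(k - 1).toNat, by omega⟩
    have h1 : (0:ℤ) ≤ (n:ℤ) + 1 := by positivity
    have h2 : (0:ℤ) ≤ ((n:ℤ) + 1) - 1 := by omega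
    rw [if_pos h1, if_pos h1, if_pos h2]
    have ht : ((n:ℤ) + 1).toNat = n + 1 := by omega
    have ht2 : (((n:ℤ) + 1) - 1).toNat = n := by omega
    rw [ht, ht2]
    have e1 : (∏ m ∈ Finset.range (n + 1), ((t : ℚ) - m))
        = (∏ m ∈ Finset.range n, (((t - 1 : ℤ) : ℚ) - m)) * t := by
      rw [Finset.prod_range_succ']
      congr 1
      · exact Finset.prod_congr rfl fun m _ => by push_cast; ring
      · push_cast; ring
    have e2 : (∏ m ∈ Finset.range (n + 1), (((t - 1 : ℤ) : ℚ) - m))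
        = (∏ m ∈ Finset.range n, (((t - 1 : ℤ) : ℚ) - m)) * ((t : ℚ) - 1 - n) := by
      rw [Finset.prod_range_succ]; push_cast; ring
    rw [e1, e2, Nat.factorial_succ]
    have hf : ((n.factorial : ℚ)) ≠ 0 := by positivity
    field_simp
    push_cast; ring

/-- `P_s(t) = (-1)^{|s|} det[(C(t_q, p-1-s_q))]`. -/
noncomputable def Ps {d : ℕ} (s : Fin d → ℕ) (t : Fin d → ℤ) : ℚ :=
  (-1 : ℚ) ^ (∑ q, s q) *
    Matrix.det (Matrix.of fun p q : Fin d => intChoose (t q) (((p : ℕ) : ℤ) - (s q : ℤ)))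

/-- `Δ_q P_s(t) = - P_{s+e_q}(t - e_q)`. -/
theorem delta_Ps {d : ℕ} (s : Fin d → ℕ) (t : Fin d → ℤ) (q : Fin d) :
    Ps s t - Ps s (Function.update t q (t q - 1))
      = - Ps (Function.update s q (s q + 1)) (Function.update t q (t q - 1)) := by
  classical
  set t' := Function.update t q (t q - 1) with ht'
  set B : Matrix (Fin d) (Fin d) ℚ :=
    Matrix.of (fun p r : Fin d => intChoose (t' r) (((p : ℕ) : ℤ) - (s r : ℤ))) with hB
  have htq : t' q = t q - 1 := Function.update_self q _ t
  -- matrix for Ps s t is B with column q replaced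
  have hA : (Matrix.of fun p r : Fin d => intChoose (t r) (((p : ℕ) : ℤ) - (s r : ℤ)))
      = B.updateCol q (fun p => intChoose (t q) (((p : ℕ) : ℤ) - (s q : ℤ))) := by
    ext p r
    by_cases h : r = q
    · subst h; simp [Matrix.updateCol_apply, hB]
    · simp [Matrix.updateCol_apply, h, hB, ht', Function.update_of_ne h]
  have hC : (Matrix.of fun p r : Fin d =>
        intChoose (t' r) (((p : ℕ) : ℤ) - ((Function.update s q (s q + 1) r : ℕ) : ℤ)))
      = B.updateCol q (fun p => intChoose (t' q) ((((p : ℕ) : ℤ) - (s q : ℤ)) - 1)) := by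
    ext p r
    by_cases h : r = q
    · subst h
      simp only [Matrix.updateCol_apply, if_pos rfl, Matrix.of_apply, Function.update_self]
      push_cast
      ring_nf
    · simp [Matrix.updateCol_apply, h, hB, Function.update_of_ne h]
  have hBself : B = B.updateCol q (fun p => intChoose (t' q) (((p : ℕ) : ℤ) - (s q : ℤ))) := by
    ext p r
    by_cases h : r = q
    · subst h; simp [Matrix.updateCol_apply, hB]
    · simp [Matrix.updateCol_apply, h]
  have hdet : (Matrix.of fun p r : Fin d =>
        intChoose (t r) (((p : ℕ) : ℤ) - (s r : ℤ))).det
      = B.det + (Matrix.of fun p r : Fin d =>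
        intChoose (t' r) (((p : ℕ) : ℤ) - ((Function.update s q (s q + 1) r : ℕ) : ℤ))).det := by
    rw [hA, hC]
    conv_lhs =>
      rw [show (fun p : Fin d => intChoose (t q) (((p : ℕ) : ℤ) - (s q : ℤ)))
        = (fun p : Fin d => intChoose (t' q) (((p : ℕ) : ℤ) - (s q : ℤ)))
          + (fun p : Fin d => intChoose (t' q) ((((p : ℕ) : ℤ) - (s q : ℤ)) - 1)) from
        funext fun p => by
          simp only [Pi.add_apply]; rw [htq]; exact intChoose_pascal _ _]
    rw [Matrix.det_updateCol_add]
    congr 1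
    rw [← hBself]
  have hsum : (∑ r, Function.update s q (s q + 1) r) = (∑ r, s r) + 1 := by
    rw [Finset.sum_update_of_mem (Finset.mem_univ q)]
    rw [← Finset.add_sum_erase _ s (Finset.mem_univ q)]
    simp [Finset.sdiff_singleton_eq_erase]
    ring
  unfold Ps
  rw [hdet, hsum]
  ring
end

section
/- The function M_j defined on {i ∈ I_{d,n} : i ≥ j} by M_j(i) = (-1)^{s_1+⋯+s_d} det[(C(i_q, p-1-s_q))_{1≤p,q≤d}], with s_q = #{p : i_q < j_p}, satisfies M_j(j) = 1 and the recurrence deg(j,i)·M_j(i) = ∑_k M_j(k) for all i > j, where the sum is over all k ∈ I_{d,n} with j ≤ k < i and |k| = |i| - 1, and deg(j,i) = d - #{q : i_q ∈ {j_1,…,j_d}}. -/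
open scoped Classical

/-- Membership in `I_{d,n}`: a strictly increasing sequence `1 ≤ i_1 < ⋯ < i_d ≤ n`. -/
def memI {d : ℕ} (n : ℕ) (i : Fin d → ℕ) : Prop :=
  StrictMono i ∧ ∀ q, 1 ≤ i q ∧ i q ≤ n

/-- `s_q = #{p : i_q < j_p}`. -/
noncomputable def sVec {d : ℕ} (j i : Fin d → ℕ) (q : Fin d) : ℕ :=
  (Finset.univ.filter fun p : Fin d => i q < j p).card

/-- The determinantal formula `M_j(i) = (-1)^{|s|} det[(C(i_q, p-1-s_q))]`. -/
noncomputable def Mdet {d : ℕ} (j i : Fin d → ℕ) : ℚ :=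
  (-1 : ℚ) ^ (∑ q, sVec j i q) *
    Matrix.det (Matrix.of fun p q : Fin d =>
      intChoose (i q) (((p : ℕ) : ℤ) - (sVec j i q : ℤ)))

/-- `deg(j,i) = d - #{q : i_q ∈ {j_1,…,j_d}}`. -/
noncomputable def degJI {d : ℕ} (j i : Fin d → ℕ) : ℕ :=
  d - (Finset.univ.filter fun q : Fin d => ∃ p, j p = i q).card


open Matrix

lemma intChoose_neg {t k : ℤ} (h : k < 0) : intChoose t k = 0 := by
  simp [intChoose, not_le.2 h]

lemma intChoose_zero (t : ℤ) : intChoose t 0 = 1 := by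
  simp [intChoose]

lemma intChoose_succ (t k : ℤ) : intChoose (t + 1) k = intChoose t k + intChoose t (k - 1) := by
  rcases lt_trichotomy k 0 with hk | hk | hk
  · rw [intChoose_neg hk, intChoose_neg hk, intChoose_neg (by omega)]; ring
  · subst hk
    rw [intChoose_zero, intChoose_zero, intChoose_neg (by omega)]; ring
  · have h1 : (0:ℤ) ≤ k := le_of_lt hk
    have h2 : (0:ℤ) ≤ k - 1 := by omega
    have hkn : k.toNat = (k - 1).toNat + 1 := by omega
    rw [intChoose, intChoose, intChoose, if_pos h1, if_pos h1, if_pos h2, hkn]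
    set m := (k - 1).toNat with hm
    have hfact : ((m + 1).factorial : ℚ) ≠ 0 := by exact_mod_cast (Nat.factorial_pos _).ne'
    have hfact' : ((m).factorial : ℚ) ≠ 0 := by exact_mod_cast (Nat.factorial_pos _).ne'
    rw [div_add_div _ _ hfact hfact', div_eq_div_iff hfact (by positivity)]
    have e1 : ∏ x ∈ Finset.range (m + 1), (((t:ℚ) + 1) - x)
        = ((t:ℚ) + 1) * ∏ x ∈ Finset.range m, ((t:ℚ) - x) := by
      rw [Finset.prod_range_succ', mul_comm]
      congr 1
      · push_cast; ring
      · apply Finset.prod_congr rfl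
        intro x _; push_cast; ring
    have e2 : ∏ x ∈ Finset.range (m + 1), ((t:ℚ) - x)
        = (∏ x ∈ Finset.range m, ((t:ℚ) - x)) * ((t:ℚ) - m) := Finset.prod_range_succ _ _
    push_cast
    rw [e1, e2]
    have e3 : ((m+1).factorial : ℚ) = (m.factorial : ℚ) * (m + 1) := by
      rw [Nat.factorial_succ]; push_cast; ring
    rw [e3]
    ring

noncomputable def eVec (d s : ℕ) : Fin d → ℚ := fun p => if (p : ℕ) = s then 1 else 0

noncomputable def Nmat (d : ℕ) : Matrix (Fin d) (Fin d) ℚ :=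
  Matrix.of fun p q => if (p : ℕ) = (q : ℕ) + 1 then 1 else 0

noncomputable def Amat (d : ℕ) : Matrix (Fin d) (Fin d) ℚ := 1 + Nmat d

noncomputable def Cmat (d : ℕ) : Matrix (Fin d) (Fin d) ℚ :=
  Matrix.of fun p q => if (q : ℕ) ≤ (p : ℕ) then (-1 : ℚ) ^ ((p : ℕ) - (q : ℕ)) else 0

lemma Nmat_mulVec {d : ℕ} (v : Fin d → ℚ) (p : Fin d) :
    (Nmat d *ᵥ v) p = if h : 1 ≤ (p : ℕ) then v ⟨(p : ℕ) - 1, by omega⟩ else 0 := by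
  classical
  rw [Matrix.mulVec, dotProduct]
  split_ifs with h
  · rw [Finset.sum_eq_single (⟨(p : ℕ) - 1, by omega⟩ : Fin d)]
    · simp [Nmat]; intro hne; omega
    · intro b _ hb
      simp only [Nmat, Matrix.of_apply]
      rw [if_neg, zero_mul]
      intro hpb
      apply hb
      apply Fin.ext
      simp; omega
    · simp
  · apply Finset.sum_eq_zero
    intro b _
    simp only [Nmat, Matrix.of_apply]
    rw [if_neg (by omega), zero_mul]

lemma Nmat_mulVec_eVec {d s : ℕ} : Nmat d *ᵥ eVec d s = eVec d (s + 1) := by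
  funext p
  rw [Nmat_mulVec]
  simp only [eVec]
  split_ifs with h h1 h2 <;> first | rfl | (exfalso; omega)

lemma Amat_pow_mulVec {d : ℕ} (t s : ℕ) (p : Fin d) :
    ((Amat d) ^ t *ᵥ eVec d s) p = intChoose t (((p : ℕ) : ℤ) - (s : ℤ)) := by
  induction t generalizing p with
  | zero =>
    simp only [pow_zero, Matrix.one_mulVec, eVec]
    rcases lt_trichotomy ((p : ℕ) : ℤ) (s : ℤ) with h | h | h
    · rw [if_neg (by omega), intChoose_neg (by omega)]
    · rw [if_pos (by omega), intChoose]
      rw [if_pos (by omega)]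
      simp [show ((p:ℕ):ℤ) - (s:ℤ) = 0 by omega]
    · rw [if_neg (by omega), intChoose, if_pos (by omega)]
      have h0 : (((p:ℕ):ℤ) - (s:ℤ)).toNat = (p : ℕ) - s := by omega
      rw [h0]
      have hmem : 0 ∈ Finset.range ((p:ℕ) - s) := by simp; omega
      rw [Finset.prod_eq_zero hmem (by simp), zero_div]
  | succ t ih =>
    have hA : (Amat d) ^ (t + 1) = Amat d * (Amat d) ^ t := pow_succ' _ _
    rw [hA, ← Matrix.mulVec_mulVec]
    have hstep : (Amat d *ᵥ ((Amat d) ^ t *ᵥ eVec d s)) p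
        = ((Amat d) ^ t *ᵥ eVec d s) p + (Nmat d *ᵥ ((Amat d) ^ t *ᵥ eVec d s)) p := by
      rw [Amat, Matrix.add_mulVec, Matrix.one_mulVec]; rfl
    rw [hstep, ih, Nmat_mulVec]
    have key : intChoose ((t : ℤ) + 1) (((p:ℕ):ℤ) - (s:ℤ))
        = intChoose t (((p:ℕ):ℤ) - (s:ℤ)) + intChoose t ((((p:ℕ):ℤ) - (s:ℤ)) - 1) :=
      intChoose_succ _ _
    push_cast
    push_cast at key
    rw [key]
    congr 1
    split_ifs with h
    · rw [ih]
      congr 1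
      push_cast
      omega
    · rw [intChoose_neg (by omega)]

lemma mul_Nmat {d : ℕ} (M : Matrix (Fin d) (Fin d) ℚ) (p q : Fin d) :
    (M * Nmat d) p q = if h : (q : ℕ) + 1 < d then M p ⟨(q : ℕ) + 1, h⟩ else 0 := by
  classical
  rw [Matrix.mul_apply]
  split_ifs with h
  · rw [Finset.sum_eq_single (⟨(q : ℕ) + 1, h⟩ : Fin d)]
    · simp [Nmat]
    · intro b _ hb
      simp only [Nmat, Matrix.of_apply]
      rw [if_neg, mul_zero]
      intro hpb
      exact hb (Fin.ext (by simpa using hpb))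
    · simp
  · apply Finset.sum_eq_zero
    intro b _
    simp only [Nmat, Matrix.of_apply]
    rw [if_neg (by omega), mul_zero]

lemma Cmat_mul_Amat {d : ℕ} : Cmat d * Amat d = 1 := by
  funext p q
  rw [Amat, Matrix.mul_add, Matrix.mul_one, Matrix.add_apply, mul_Nmat]
  rcases lt_trichotomy ((p : ℕ)) ((q : ℕ)) with h | h | h
  · rw [Matrix.one_apply_ne (by intro he; rw [he] at h; omega)]
    have e1 : Cmat d p q = 0 := by
      simp only [Cmat, Matrix.of_apply]; rw [if_neg (by omega)]
    rw [e1]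
    by_cases h2 : (q : ℕ) + 1 < d
    · rw [dif_pos h2]
      have e2 : Cmat d p ⟨(q : ℕ) + 1, h2⟩ = 0 := by
        simp only [Cmat, Matrix.of_apply]; rw [if_neg (by simp; omega)]
      rw [e2]; ring
    · rw [dif_neg h2]; ring
  · have hpq : p = q := Fin.ext h
    subst hpq
    rw [Matrix.one_apply_eq]
    have e1 : Cmat d p p = 1 := by
      simp only [Cmat, Matrix.of_apply]; rw [if_pos le_rfl]; simp
    by_cases h2 : (p : ℕ) + 1 < d
    · rw [dif_pos h2]
      have e2 : Cmat d p ⟨(p : ℕ) + 1, h2⟩ = 0 := by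
        simp only [Cmat, Matrix.of_apply]; rw [if_neg (by simp)]
      rw [e1, e2]; ring
    · rw [dif_neg h2, e1]; ring
  · rw [Matrix.one_apply_ne (by intro he; rw [he] at h; omega)]
    have h2 : (q : ℕ) + 1 < d := by omega
    rw [dif_pos h2]
    have e1 : Cmat d p q = (-1 : ℚ) ^ ((p : ℕ) - (q : ℕ)) := by
      simp only [Cmat, Matrix.of_apply]; rw [if_pos (by omega)]
    have e2 : Cmat d p ⟨(q : ℕ) + 1, h2⟩ = (-1 : ℚ) ^ ((p : ℕ) - ((q : ℕ) + 1)) := by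
      simp only [Cmat, Matrix.of_apply]
      rw [if_pos (show ((⟨(q : ℕ) + 1, h2⟩ : Fin d) : ℕ) ≤ (p : ℕ) by simp only [Fin.val_mk]; omega)]
    rw [e1, e2]
    have e3 : (p : ℕ) - (q : ℕ) = ((p : ℕ) - ((q : ℕ) + 1)) + 1 := by omega
    rw [e3, pow_succ]
    ring

lemma Cmat_mul_Amat_pow {d t : ℕ} (ht : 1 ≤ t) : Cmat d * (Amat d) ^ t = (Amat d) ^ (t - 1) := by
  obtain ⟨u, rfl⟩ : ∃ u, t = u + 1 := ⟨t - 1, by omega⟩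
  rw [pow_succ' (Amat d) u, ← mul_assoc, Cmat_mul_Amat, one_mul]
  simp

lemma trace_Nmat_Cmat {d : ℕ} : Matrix.trace (Nmat d * Cmat d) = 0 := by
  rw [Matrix.trace]
  apply Finset.sum_eq_zero
  intro p _
  rw [Matrix.diag_apply, Matrix.mul_apply]
  apply Finset.sum_eq_zero
  intro b _
  simp only [Nmat, Cmat, Matrix.of_apply]
  rcases eq_or_ne ((p : ℕ)) ((b : ℕ) + 1) with h | h
  · rw [if_pos h, one_mul, if_neg (by omega)]
  · rw [if_neg h, zero_mul]

lemma sum_det_updateCol {d : ℕ} (B W : Matrix (Fin d) (Fin d) ℚ) :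
    ∑ q, (W.updateCol q (fun p => (B * W) p q)).det = Matrix.trace B * W.det := by
  have h1 : ∀ q : Fin d, (W.updateCol q (fun p => (B * W) p q)).det
      = ((W.adjugate * (B * W))) q q := by
    intro q
    rw [← Matrix.cramer_apply, Matrix.cramer_eq_adjugate_mulVec]
    rw [Matrix.mul_apply, Matrix.mulVec, dotProduct]
  calc ∑ q, (W.updateCol q (fun p => (B * W) p q)).det
      = ∑ q, ((W.adjugate * (B * W))) q q := Finset.sum_congr rfl fun q _ => h1 q
    _ = Matrix.trace (W.adjugate * (B * W)) := rfl
    _ = Matrix.trace ((B * W) * W.adjugate) := Matrix.trace_mul_comm _ _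
    _ = Matrix.trace (B * (W * W.adjugate)) := by rw [mul_assoc]
    _ = Matrix.trace (B * (W.det • (1 : Matrix (Fin d) (Fin d) ℚ))) := by
        rw [Matrix.mul_adjugate]
    _ = Matrix.trace (W.det • B) := by rw [mul_smul_comm, mul_one]
    _ = W.det • Matrix.trace B := Matrix.trace_smul _ _
    _ = Matrix.trace B * W.det := by rw [smul_eq_mul, mul_comm]

lemma det_eq_zero_of_zero_block {d : ℕ} (M : Matrix (Fin d) (Fin d) ℚ)
    (R C : Finset (Fin d)) (hcard : d < R.card + C.card)
    (hz : ∀ r ∈ R, ∀ c ∈ C, M r c = 0) : M.det = 0 := by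
  classical
  rw [Matrix.det_apply]
  apply Finset.sum_eq_zero
  intro σ _
  have : ∃ c ∈ C, σ c ∈ R := by
    by_contra hcon
    push_neg at hcon
    have hsub : C.image σ ⊆ Finset.univ \ R := by
      intro x hx
      rw [Finset.mem_image] at hx
      obtain ⟨c, hc, rfl⟩ := hx
      rw [Finset.mem_sdiff]
      exact ⟨Finset.mem_univ _, hcon c hc⟩
    have h1 : (C.image σ).card = C.card := Finset.card_image_of_injective _ σ.injective
    have h2 : (Finset.univ \ R).card = d - R.card := by
      rw [Finset.card_sdiff_of_subset (Finset.subset_univ _)]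
      simp
    have := Finset.card_le_card hsub
    rw [h1, h2] at this
    have hR := Finset.card_le_card (Finset.subset_univ R)
    simp only [Finset.card_univ, Fintype.card_fin] at hR
    omega
  obtain ⟨c, hc, hr⟩ := this
  have hp : (∏ i, M (σ i) i) = 0 :=
    Finset.prod_eq_zero (Finset.mem_univ c) (hz _ hr _ hc)
  rw [hp, smul_zero]

lemma det_antiTriangular : ∀ {d : ℕ} (M : Matrix (Fin d) (Fin d) ℚ),
    (∀ p q : Fin d, (p : ℕ) + (q : ℕ) < d - 1 → M p q = 0) →
    (∀ p q : Fin d, (p : ℕ) + (q : ℕ) = d - 1 → M p q = 1) →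
    M.det = (-1 : ℚ) ^ (∑ q : Fin d, (q : ℕ)) := by
  intro d
  induction d with
  | zero => intro M _ _; simp [Matrix.det_isEmpty]
  | succ d ih =>
    intro M h0 h1
    rw [Matrix.det_succ_row_zero, Fin.sum_univ_castSucc]
    rw [Finset.sum_eq_zero (fun (q : Fin d) (_ : q ∈ Finset.univ) => by
      have hzq : M 0 q.castSucc = 0 := h0 0 q.castSucc
        (by simp only [Fin.val_zero, Fin.coe_castSucc]; omega)
      rw [hzq]; ring)]
    rw [zero_add]
    have hlast : M 0 (Fin.last d) = 1 := h1 0 (Fin.last d) (by simp)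
    rw [hlast]
    have hsub : (M.submatrix Fin.succ (Fin.last d).succAbove).det
        = (-1 : ℚ) ^ (∑ q : Fin d, (q : ℕ)) := by
      apply ih
      · intro p q hpq
        rw [Matrix.submatrix_apply, Fin.succAbove_last]
        apply h0
        simp [Fin.val_succ]
        omega
      · intro p q hpq
        rw [Matrix.submatrix_apply, Fin.succAbove_last]
        apply h1
        simp [Fin.val_succ]
        omega
    rw [hsub]
    have : (∑ q : Fin (d+1), (q : ℕ)) = (∑ q : Fin d, (q : ℕ)) + d := by
      rw [Fin.sum_univ_castSucc]
      simp
    rw [this, pow_add]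
    simp [Fin.val_last]
    ring

/-- The determinantal formula satisfies the initial condition and the recurrence
characterizing Schubert multiplicities. -/
theorem Mdet_initial_and_recurrence {d n : ℕ} (j : Fin d → ℕ) (hj : memI n j) :
    Mdet j j = 1 ∧
    ∀ i : Fin d → ℕ, memI n i → (∀ q, j q ≤ i q) → i ≠ j →
      (degJI j i : ℚ) * Mdet j i =
        ∑ k ∈ (Fintype.piFinset fun _ : Fin d => Finset.range (n + 1)).filter
            (fun k => memI n k ∧ (∀ q, j q ≤ k q ∧ k q ≤ i q) ∧ k ≠ i ∧
              ∑ q, k q = (∑ q, i q) - 1),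
          Mdet j k := by
  obtain ⟨hjmono, hjbd⟩ := hj
  constructor
  · -- initial condition
    have hs : ∀ q : Fin d, sVec j j q = d - 1 - (q : ℕ) := by
      intro q
      rw [sVec]
      have he : (Finset.univ.filter fun p : Fin d => j q < j p) = Finset.Ioi q := by
        ext p
        simp [Finset.mem_Ioi, hjmono.lt_iff_lt]
      rw [he, Fin.card_Ioi]
    rw [Mdet]
    have hdet : (Matrix.of fun p q : Fin d =>
        intChoose (j q) (((p : ℕ) : ℤ) - (sVec j j q : ℤ))).det
        = (-1 : ℚ) ^ (∑ q : Fin d, (q : ℕ)) := by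
      apply det_antiTriangular
      · intro p q hpq
        simp only [Matrix.of_apply]
        apply intChoose_neg
        rw [hs q]
        have := q.isLt
        omega
      · intro p q hpq
        simp only [Matrix.of_apply]
        have hq := q.isLt
        have h0 : ((p : ℕ) : ℤ) - ((sVec j j q : ℕ) : ℤ) = 0 := by rw [hs q]; omega
        rw [h0, intChoose_zero]
    rw [hdet]
    have hsum : (∑ q, sVec j j q) = ∑ q : Fin d, (d - 1 - (q : ℕ)) :=
      Finset.sum_congr rfl fun q _ => hs q
    rw [hsum, ← pow_add]
    apply Even.neg_one_pow
    have hsum2 : (∑ q : Fin d, (d - 1 - (q : ℕ))) + (∑ q : Fin d, (q : ℕ))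
        = ∑ q : Fin d, (d - 1) := by
      rw [← Finset.sum_add_distrib]
      apply Finset.sum_congr rfl
      intro q _
      have := q.isLt
      omega
    rw [hsum2, Finset.sum_const, Finset.card_univ, Fintype.card_fin, smul_eq_mul]
    rcases Nat.eq_zero_or_pos d with h | h
    · subst h; simp
    · have : d * (d - 1) = (d - 1) * ((d - 1) + 1) := by rw [mul_comm]; congr 1; omega
      rw [this]
      exact Nat.even_mul_succ_self _

  · -- recurrence
    intro i hi hji hne
    classical
    obtain ⟨himono, hibd⟩ := hi
    rcases Nat.eq_zero_or_pos d with hd0 | hd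
    · subst hd0; exact absurd (funext fun q => q.elim0) hne
    set s : Fin d → ℕ := sVec j i with hsdef
    set W : Matrix (Fin d) (Fin d) ℚ :=
      Matrix.of (fun p q : Fin d => intChoose (i q) (((p : ℕ) : ℤ) - (s q : ℤ))) with hWdef
    set c : Fin d → ℕ := fun q => if ∃ p, j p = i q then 1 else 0 with hcdef
    set ks : Fin d → (Fin d → ℕ) := fun q => Function.update i q (i q - 1) with hksdef
    set Y : Fin d → ℚ := fun q => (W.updateCol q
      (fun p : Fin d => intChoose ((i q - 1 : ℕ) : ℤ) (((p : ℕ) : ℤ) - (s q : ℤ) - 1))).det with hYdef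
    -- basic facts
    have hi1 : ∀ q, 1 ≤ i q := fun q => (hibd q).1
    have hks_apply : ∀ q r, ks q r = if r = q then i q - 1 else i r := by
      intro q r; rw [hksdef]; simp [Function.update_apply]
    have hshift : ∀ q : Fin d,
        (Finset.univ.filter fun p => (i q - 1 : ℕ) < j p).card = s q + c q := by
      intro q
      have hsplit : (Finset.univ.filter fun p : Fin d => (i q - 1 : ℕ) < j p)
          = (Finset.univ.filter fun p => i q < j p) ∪ (Finset.univ.filter fun p => j p = i q) := by
        ext p
        simp only [Finset.mem_filter, Finset.mem_union, Finset.mem_univ, true_and]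
        have := hi1 q
        omega
      have hdisj : Disjoint (Finset.univ.filter fun p : Fin d => i q < j p)
          (Finset.univ.filter fun p : Fin d => j p = i q) := by
        rw [Finset.disjoint_filter]
        intro p _ hp hp2
        omega
      rw [hsplit, Finset.card_union_of_disjoint hdisj]
      congr 1
      rw [hcdef]
      simp only []
      by_cases hex : ∃ p, j p = i q
      · obtain ⟨p0, hp0⟩ := hex
        rw [if_pos ⟨p0, hp0⟩]
        have : (Finset.univ.filter fun p : Fin d => j p = i q) = {p0} := by
          ext p
          simp only [Finset.mem_filter, Finset.mem_univ, true_and, Finset.mem_singleton]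
          constructor
          · intro hp; exact hjmono.injective (hp.trans hp0.symm)
          · intro hp; subst hp; exact hp0
        rw [this, Finset.card_singleton]
      · rw [if_neg hex]
        rw [Finset.card_eq_zero.2]
        rw [Finset.filter_eq_empty_iff]
        intro p _
        exact fun hp => hex ⟨p, hp⟩
    have hWcol : ∀ q : Fin d, (fun p => W p q) = (Amat d) ^ (i q) *ᵥ eVec d (s q) := by
      intro q; funext p
      rw [Amat_pow_mulVec]
      rfl
    -- the Y-columns come from B * W with B = Nmat * Cmat
    have hYcol : ∀ q : Fin d,
        (fun p : Fin d => intChoose ((i q - 1 : ℕ) : ℤ) (((p : ℕ) : ℤ) - (s q : ℤ) - 1))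
        = fun p => ((Nmat d * Cmat d) * W) p q := by
      intro q
      have h1 : (fun p => ((Nmat d * Cmat d) * W) p q)
          = (Nmat d * Cmat d) *ᵥ (fun k => W k q) := by
        funext p
        rw [Matrix.mul_apply, Matrix.mulVec, dotProduct]
      rw [h1, hWcol q, Matrix.mulVec_mulVec]
      have hcomm : Nmat d * Amat d = Amat d * Nmat d := by
        rw [Amat, mul_add, add_mul, mul_one, one_mul]
      have hcommp : Nmat d * (Amat d) ^ (i q - 1) = (Amat d) ^ (i q - 1) * Nmat d :=
        (Commute.pow_right hcomm _)
      have h2 : Nmat d * Cmat d * (Amat d) ^ (i q)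
          = (Amat d) ^ (i q - 1) * Nmat d := by
        rw [mul_assoc, Cmat_mul_Amat_pow (hi1 q), hcommp]
      rw [h2, ← Matrix.mulVec_mulVec, Nmat_mulVec_eVec]
      funext p
      rw [Amat_pow_mulVec]
      congr 1
      push_cast
      ring
    have hsumY : ∑ q, Y q = 0 := by
      have h := sum_det_updateCol (Nmat d * Cmat d) W
      rw [trace_Nmat_Cmat, zero_mul] at h
      rw [← h]
      apply Finset.sum_congr rfl
      intro q _
      rw [hYdef]
      simp only []
      rw [hYcol q]
    have hYzero : ∀ q : Fin d, i q = j q → Y q = 0 := by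
      intro q hq
      have hsq : s q = d - 1 - (q : ℕ) := by
        rw [hsdef, sVec]
        have he : (Finset.univ.filter fun p : Fin d => i q < j p) = Finset.Ioi q := by
          ext p
          rw [hq]
          simp [Finset.mem_Ioi, hjmono.lt_iff_lt]
        rw [he, Fin.card_Ioi]
      have hsge : ∀ r : Fin d, r < q → d - (q : ℕ) ≤ s r := by
        intro r hr
        have hsub : Finset.Ici q ⊆ (Finset.univ.filter fun p : Fin d => i r < j p) := by
          intro p hp
          rw [Finset.mem_Ici] at hp
          rw [Finset.mem_filter]
          refine ⟨Finset.mem_univ _, ?_⟩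
          have h1 : i r < i q := himono hr
          have h2 : j q ≤ j p := hjmono.monotone hp
          omega
        have := Finset.card_le_card hsub
        rw [Fin.card_Ici] at this
        exact le_trans this (le_of_eq rfl)
      rw [hYdef]
      simp only []
      have hqd : (q : ℕ) < d := q.isLt
      apply det_eq_zero_of_zero_block _ (Finset.Iic (⟨d - 1 - (q : ℕ), by omega⟩ : Fin d))
        (Finset.Iic q)
      · rw [Fin.card_Iic, Fin.card_Iic]
        simp only [Fin.val_mk]
        omega
      · intro p hp r hr
        rw [Finset.mem_Iic] at hp
        have hp' : (p : ℕ) ≤ d - 1 - (q : ℕ) := hp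
        clear hp
        rw [Finset.mem_Iic, Fin.le_def] at hr
        rcases eq_or_ne r q with hrq | hrq
        · subst hrq
          rw [Matrix.updateCol_apply, if_pos rfl]
          apply intChoose_neg
          rw [hsq]
          omega
        · have hrltq : (r : ℕ) < (q : ℕ) := by
            rcases lt_or_eq_of_le hr with h | h
            · exact h
            · exact absurd (Fin.ext h) hrq
          rw [Matrix.updateCol_apply, if_neg hrq]
          rw [hWdef]
          simp only [Matrix.of_apply]
          apply intChoose_neg
          have := hsge r (by rwa [Fin.lt_def])
          omega
    have hsv : ∀ q r : Fin d, sVec j (ks q) r = if r = q then s q + c q else s r := by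
      intro q r
      rw [sVec, hks_apply q r]
      rcases eq_or_ne r q with h | h
      · rw [if_pos h, if_pos h, ← hshift q]
      · rw [if_neg h, if_neg h, hsdef, sVec]
    have hMks : ∀ q : Fin d, j q < i q →
        Mdet j (ks q) = (if ∃ p, j p = i q then 0 else Mdet j i)
          - (-1 : ℚ) ^ (∑ r, s r) * Y q := by
      intro q hq
      have hsum' : (∑ r, sVec j (ks q) r) = (∑ r, s r) + c q := by
        have hterm : ∀ r, sVec j (ks q) r = s r + (if r = q then c q else 0) := by
          intro r
          rw [hsv q r]
          split_ifs with h
          · subst h; ring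
          · omega
        rw [Finset.sum_congr rfl (fun r _ => hterm r), Finset.sum_add_distrib,
          Finset.sum_ite_eq' Finset.univ q (fun _ => c q), if_pos (Finset.mem_univ q)]
      have hmat : (Matrix.of fun p r : Fin d =>
          intChoose (ks q r) (((p : ℕ) : ℤ) - (sVec j (ks q) r : ℤ)))
          = W.updateCol q (fun p : Fin d => intChoose ((i q - 1 : ℕ) : ℤ)
              (((p : ℕ) : ℤ) - (s q : ℤ) - (c q : ℤ))) := by
        funext p r
        rw [Matrix.updateCol_apply]
        rcases eq_or_ne r q with h | h
        · subst h
          rw [if_pos rfl]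
          simp only [Matrix.of_apply]
          rw [hks_apply, if_pos rfl, hsv, if_pos rfl]
          congr 1
          push_cast
          ring
        · rw [if_neg h]
          simp only [Matrix.of_apply]
          rw [hks_apply, if_neg h, hsv, if_neg h]
          rfl
      rw [Mdet, hsum', hmat]
      by_cases hex : ∃ p, j p = i q
      · have hc1 : c q = 1 := by rw [hcdef]; simp only []; rw [if_pos hex]
        rw [if_pos hex, hc1]
        simp only [Nat.cast_one]
        rw [pow_add, pow_one, hYdef]
        simp only []
        ring
      · have hc0 : c q = 0 := by rw [hcdef]; simp only []; rw [if_neg hex]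
        rw [if_neg hex, hc0]
        simp only [Nat.cast_zero, add_zero, sub_zero, pow_zero, mul_one]
        have hpascal : ∀ p : Fin d, W p q
            = intChoose ((i q - 1 : ℕ) : ℤ) (((p : ℕ) : ℤ) - (s q : ℤ))
              + intChoose ((i q - 1 : ℕ) : ℤ) (((p : ℕ) : ℤ) - (s q : ℤ) - 1) := by
          intro p
          rw [hWdef]
          simp only [Matrix.of_apply]
          have h1 : ((i q : ℕ) : ℤ) = ((i q - 1 : ℕ) : ℤ) + 1 := by
            have := hi1 q; push_cast; omega
          rw [h1, intChoose_succ]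
        have hdetsplit : W.det
            = (W.updateCol q (fun p : Fin d => intChoose ((i q - 1 : ℕ) : ℤ)
                (((p : ℕ) : ℤ) - (s q : ℤ)))).det
              + (W.updateCol q (fun p : Fin d => intChoose ((i q - 1 : ℕ) : ℤ)
                (((p : ℕ) : ℤ) - (s q : ℤ) - 1))).det := by
          rw [← Matrix.det_updateCol_add]
          have hcol : (fun p : Fin d => intChoose ((i q - 1 : ℕ) : ℤ) (((p : ℕ) : ℤ) - (s q : ℤ))
              + intChoose ((i q - 1 : ℕ) : ℤ) (((p : ℕ) : ℤ) - (s q : ℤ) - 1))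
              = fun p => W p q := by
            funext p
            rw [hpascal p]
          have : (fun p : Fin d => intChoose ((i q - 1 : ℕ) : ℤ) (((p : ℕ) : ℤ) - (s q : ℤ)))
              + (fun p : Fin d => intChoose ((i q - 1 : ℕ) : ℤ) (((p : ℕ) : ℤ) - (s q : ℤ) - 1))
              = fun p => W p q := hcol
          rw [this, Matrix.updateCol_eq_self]
        rw [Mdet, ← hsdef, ← hWdef, hYdef]
        simp only []
        rw [hdetsplit]
        ring
    have hMks0 : ∀ q : Fin d, j q < i q → ¬ memI n (ks q) → Mdet j (ks q) = 0 := by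
      intro q hq hnm
      have hex : ∃ r : Fin d, r < q ∧ i r = i q - 1 := by
        by_contra hcon
        push_neg at hcon
        apply hnm
        constructor
        · intro a b hab
          rw [hks_apply, hks_apply]
          rcases eq_or_ne a q with ha | ha <;> rcases eq_or_ne b q with hb | hb
          · subst ha; subst hb; exact absurd hab (lt_irrefl _)
          · subst ha
            rw [if_pos rfl, if_neg hb]
            have := himono hab
            omega
          · subst hb
            rw [if_neg ha, if_pos rfl]
            have h1 := himono hab
            have h2 := hcon a hab
            omega
          · rw [if_neg ha, if_neg hb]; exact himono hab
        · intro r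
          rw [hks_apply]
          split_ifs with h
          · have h1 := (hjbd q).1
            have h2 := (hibd q).2
            omega
          · exact hibd r
      obtain ⟨r, hrq, hri⟩ := hex
      have hsr : s r = s q + c q := by
        rw [← hshift q, hsdef, sVec]
        congr 1
        ext p
        simp only [Finset.mem_filter, Finset.mem_univ, true_and]
        rw [hri]
      rw [Mdet]
      apply mul_eq_zero_of_right
      apply Matrix.det_zero_of_column_eq (ne_of_lt hrq)
      intro k
      simp only [Matrix.of_apply]
      rw [hsv, hsv, if_neg (ne_of_lt hrq), if_pos rfl, hks_apply, hks_apply,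
        if_neg (ne_of_lt hrq), if_pos rfl, hri, hsr]
    have hks_sum : ∀ q : Fin d, ∑ r, ks q r = (∑ r, i r) - 1 := by
      intro q
      have h1 : ∑ r, ks q r = (i q - 1) + ∑ r ∈ Finset.univ.erase q, i r := by
        rw [hksdef]
        simp only []
        rw [Finset.sum_update_of_mem (Finset.mem_univ q)]
        congr 1
        rw [Finset.sdiff_singleton_eq_erase]
      have h2 : i q + ∑ r ∈ Finset.univ.erase q, i r = ∑ r, i r :=
        Finset.add_sum_erase _ _ (Finset.mem_univ q)
      have := hi1 q
      omega
    set V : Finset (Fin d) := Finset.univ.filter (fun q => memI n (ks q) ∧ j q < i q) with hVdef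
    have hSeq : (Fintype.piFinset fun _ : Fin d => Finset.range (n + 1)).filter
        (fun k => memI n k ∧ (∀ q, j q ≤ k q ∧ k q ≤ i q) ∧ k ≠ i ∧
          ∑ q, k q = (∑ q, i q) - 1) = V.image ks := by
      ext k
      rw [Finset.mem_filter, Finset.mem_image]
      constructor
      · rintro ⟨hpi, hkI, hbound, hkne, hksum⟩
        obtain ⟨q, hq⟩ := Function.ne_iff.1 hkne
        have hkle : ∀ r, k r ≤ i r := fun r => (hbound r).2
        have hsum_pos : 1 ≤ ∑ r, i r := by
          have h0 : i ⟨0, hd⟩ ≤ ∑ r, i r :=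
            Finset.single_le_sum (fun r _ => Nat.zero_le _) (Finset.mem_univ _)
          have := hi1 ⟨0, hd⟩
          omega
        have htot : (∑ r, ((i r : ℤ) - k r)) = 1 := by
          rw [Finset.sum_sub_distrib, ← Nat.cast_sum, ← Nat.cast_sum]
          omega
        have hnn : ∀ r, 0 ≤ (i r : ℤ) - k r := fun r => by have := hkle r; omega
        have hq1 : 1 ≤ (i q : ℤ) - k q := by have := hkle q; omega
        have hsplit : ((i q : ℤ) - k q) + ∑ r ∈ Finset.univ.erase q, ((i r : ℤ) - k r)
            = ∑ r, ((i r : ℤ) - k r) :=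
          Finset.add_sum_erase Finset.univ (fun r => (i r : ℤ) - k r) (Finset.mem_univ q)
        have hs0 : ∑ r ∈ Finset.univ.erase q, ((i r : ℤ) - k r) = 0 := by
          refine le_antisymm ?_ (Finset.sum_nonneg fun r _ => hnn r)
          omega
        have herase0 := (Finset.sum_eq_zero_iff_of_nonneg (fun r _ => hnn r)).1 hs0
        have hkiq : k q = i q - 1 ∧ 1 ≤ i q := by
          have := hi1 q
          omega
        have hkeq : k = ks q := by
          funext r
          rw [hks_apply]
          rcases eq_or_ne r q with h | h
          · subst h; rw [if_pos rfl]; exact hkiq.1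
          · rw [if_neg h]
            have := herase0 r (Finset.mem_erase.2 ⟨h, Finset.mem_univ r⟩)
            omega
        refine ⟨q, ?_, hkeq.symm⟩
        rw [hVdef, Finset.mem_filter]
        refine ⟨Finset.mem_univ _, hkeq ▸ hkI, ?_⟩
        have := (hbound q).1
        have := hkiq.1
        have := hkiq.2
        omega
      · rintro ⟨q, hqV, rfl⟩
        rw [hVdef, Finset.mem_filter] at hqV
        obtain ⟨-, hmemks, hjq⟩ := hqV
        have hiq := hi1 q
        refine ⟨?_, hmemks, ?_, ?_, hks_sum q⟩
        · rw [Fintype.mem_piFinset]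
          intro r
          rw [Finset.mem_range]
          have := (hmemks.2 r).2
          omega
        · intro r
          rw [hks_apply]
          split_ifs with h
          · subst h; exact ⟨by omega, by omega⟩
          · exact ⟨hji r, le_refl _⟩
        · intro he
          have := congrFun he q
          rw [hks_apply, if_pos rfl] at this
          omega
    have hksinj : ∀ x ∈ V, ∀ y ∈ V, ks x = ks y → x = y := by
      intro x _ y _ hxy
      by_contra hne2
      have := congrFun hxy x
      rw [hks_apply, hks_apply, if_pos rfl, if_neg hne2] at this
      have := hi1 x
      omega
    rw [hSeq, Finset.sum_image hksinj]
    have hVsub : V ⊆ Finset.univ.filter (fun q => j q < i q) := by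
      intro q hq
      rw [hVdef, Finset.mem_filter] at hq
      rw [Finset.mem_filter]
      exact ⟨Finset.mem_univ _, hq.2.2⟩
    rw [Finset.sum_subset hVsub (fun q hq hnq => by
      rw [Finset.mem_filter] at hq
      have hnmem : ¬ memI n (ks q) := by
        intro hmem
        exact hnq (by rw [hVdef, Finset.mem_filter]; exact ⟨Finset.mem_univ _, hmem, hq.2⟩)
      exact hMks0 q hq.2 hnmem)]
    rw [Finset.sum_congr rfl (fun q hq => hMks q (Finset.mem_filter.1 hq).2)]
    rw [Finset.sum_sub_distrib]
    have hYAB : ∑ q ∈ Finset.univ.filter (fun q => j q < i q), Y q = 0 := by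
      have hsplit := Finset.sum_filter_add_sum_filter_not Finset.univ
        (fun q => j q < i q) Y
      have hz2 : ∑ q ∈ Finset.univ.filter (fun q => ¬ j q < i q), Y q = 0 := by
        apply Finset.sum_eq_zero
        intro q hq
        rw [Finset.mem_filter] at hq
        exact hYzero q (by have := hji q; omega)
      rw [hz2, add_zero, hsumY] at hsplit
      exact hsplit
    rw [← Finset.mul_sum, hYAB, mul_zero, sub_zero]
    rw [Finset.sum_ite, Finset.sum_const_zero, zero_add, Finset.sum_const]
    have hfilter_eq : (Finset.univ.filter (fun q => j q < i q)).filter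
        (fun q => ¬ ∃ p, j p = i q) = Finset.univ.filter (fun q => ¬ ∃ p, j p = i q) := by
      ext q
      simp only [Finset.mem_filter, Finset.mem_univ, true_and]
      constructor
      · exact fun h => h.2
      · intro h
        refine ⟨?_, h⟩
        have h2 := hji q
        rcases lt_or_eq_of_le h2 with h3 | h3
        · exact h3
        · exact absurd ⟨q, h3⟩ h
    rw [hfilter_eq]
    have hcards := Finset.card_filter_add_card_filter_not
      (s := (Finset.univ : Finset (Fin d))) (p := fun q => ∃ p, j p = i q)
    rw [Finset.card_univ, Fintype.card_fin] at hcards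
    have hdeg : degJI j i = (Finset.univ.filter (fun q => ¬ ∃ p, j p = i q)).card := by
      rw [degJI]
      omega
    rw [hdeg, nsmul_eq_mul]
end
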